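/- The double series Σ_{d ≥ 1, t ≥ 1, gcd(d,t) = 1} μ(d) μ(t) / (d² t²) converges and equals the infinite product Π_p (1 − 2/p²) over all primes p. -/

import Mathlib

open ArithmeticFunction

/-!
Group the terms by `n = d * t`. If `w` is multiplicative on coprime arguments and vanishes off
squarefree numbers (as `μ` does), each coprime factorization contributes `w n / n²`; when `n` is
squarefree every factorization is coprime, and otherwise `w n = 0`. So the fibre over `n` sums to
`w n * τ(n) / n²`, a multiplicative function whose absolute summability comes from that of the
double series for `|w|`. Its Euler factor at `p` has only the terms `e = 0, 1`, giving
`1 + 2 w(p) / p² = 1 - 2 / p²`.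
-/

structure IsSquarefreeMultiplicative (w : ℕ → ℝ) : Prop where
  map_mul_of_coprime {d t : ℕ} : d.Coprime t → w (d * t) = w d * w t
  eq_zero_of_not_squarefree {n : ℕ} : ¬Squarefree n → w n = 0

theorem IsSquarefreeMultiplicative.abs {w : ℕ → ℝ} (hw : IsSquarefreeMultiplicative w) :
    IsSquarefreeMultiplicative (|w ·|) where
  map_mul_of_coprime h := by simp only [hw.map_mul_of_coprime h, abs_mul]
  eq_zero_of_not_squarefree h := by simp only [hw.eq_zero_of_not_squarefree h, abs_zero]

theorem isSquarefreeMultiplicative_moebius :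
    IsSquarefreeMultiplicative (fun n => (moebius n : ℝ)) where
  map_mul_of_coprime h := by simp only [isMultiplicative_moebius.map_mul_of_coprime h, Int.cast_mul]
  eq_zero_of_not_squarefree h := by simp only [moebius_eq_zero_of_not_squarefree h, Int.cast_zero]

noncomputable def coprimePairTerm (w : ℕ → ℝ) (dt : ℕ × ℕ) : ℝ :=
  if 1 ≤ dt.1 ∧ 1 ≤ dt.2 ∧ Nat.Coprime dt.1 dt.2 then
    w dt.1 * w dt.2 / ((dt.1 : ℝ) ^ 2 * (dt.2 : ℝ) ^ 2)
  else 0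

/-- The sum of `coprimePairTerm w` over the fibre `d * t = n`. -/
noncomputable def divisorsCardTerm (w : ℕ → ℝ) (n : ℕ) : ℝ :=
  w n * n.divisors.card / (n : ℝ) ^ 2

section

variable {w : ℕ → ℝ}

theorem abs_coprimePairTerm (dt : ℕ × ℕ) :
    |coprimePairTerm w dt| = coprimePairTerm (|w ·|) dt := by
  unfold coprimePairTerm
  split_ifs
  · rw [abs_div, abs_mul, abs_of_nonneg (a := (_ : ℝ) ^ 2 * _) (by positivity)]
  · exact abs_zero

theorem abs_divisorsCardTerm (n : ℕ) :
    |divisorsCardTerm w n| = divisorsCardTerm (|w ·|) n := by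
  rw [divisorsCardTerm, divisorsCardTerm, abs_div, abs_mul, Nat.abs_cast, abs_pow, Nat.abs_cast]

theorem summable_coprimePairTerm (hw : ∀ n, |w n| ≤ 1) : Summable (coprimePairTerm w) := by
  have hsq : Summable (fun n : ℕ => 1 / (n : ℝ) ^ 2) :=
    Real.summable_one_div_nat_pow.mpr one_lt_two
  refine (hsq.mul_of_nonneg hsq (fun _ => by positivity) (fun _ => by positivity)).of_norm_bounded
    fun dt => ?_
  rw [Real.norm_eq_abs, abs_coprimePairTerm, coprimePairTerm]
  split_ifs
  · rw [one_div_mul_one_div]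
    gcongr
    exact mul_le_one₀ (hw _) (abs_nonneg _) (hw _)
  · positivity

theorem coprimePairTerm_of_mul_eq_zero {dt : ℕ × ℕ} (h : dt.1 * dt.2 = 0) :
    coprimePairTerm w dt = 0 :=
  if_neg fun ⟨h₁, h₂, _⟩ => by rcases Nat.mul_eq_zero.mp h with h | h <;> omega

theorem coprimePairTerm_of_mem_divisorsAntidiagonal {n : ℕ} {dt : ℕ × ℕ}
    (hw : IsSquarefreeMultiplicative w) (hdt : dt ∈ n.divisorsAntidiagonal) :
    coprimePairTerm w dt = if dt.1.Coprime dt.2 then w n / (n : ℝ) ^ 2 else 0 := by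
  obtain ⟨h₁, h₂⟩ := Nat.ne_zero_of_mem_divisorsAntidiagonal hdt
  have hn := (Nat.mem_divisorsAntidiagonal.mp hdt).1
  by_cases hc : dt.1.Coprime dt.2
  · rw [coprimePairTerm,
      if_pos ⟨Nat.one_le_iff_ne_zero.mpr h₁, Nat.one_le_iff_ne_zero.mpr h₂, hc⟩, if_pos hc,
      ← hw.map_mul_of_coprime hc, hn, ← hn]
    push_cast
    ring
  · rw [coprimePairTerm, if_neg (by tauto), if_neg hc]

theorem sum_divisorsAntidiagonal_coprimePairTerm (hw : IsSquarefreeMultiplicative w) (n : ℕ) :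
    ∑ dt ∈ n.divisorsAntidiagonal, coprimePairTerm w dt = divisorsCardTerm w n := by
  rw [Finset.sum_congr rfl fun _ => coprimePairTerm_of_mem_divisorsAntidiagonal hw]
  by_cases hsq : Squarefree n
  · have hcop : ∀ dt ∈ n.divisorsAntidiagonal, dt.1.Coprime dt.2 := fun dt hdt =>
      Nat.coprime_of_squarefree_mul ((Nat.mem_divisorsAntidiagonal.mp hdt).1 ▸ hsq)
    rw [Finset.sum_congr rfl fun dt hdt => if_pos (hcop dt hdt), Finset.sum_const,
      ← Nat.map_div_right_divisors, Finset.card_map, nsmul_eq_mul, divisorsCardTerm]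
    ring
  · simp [divisorsCardTerm, hw.eq_zero_of_not_squarefree hsq]

theorem tsum_preimage_mul_coprimePairTerm (hw : IsSquarefreeMultiplicative w) (n : ℕ) :
    ∑' dt : (fun p : ℕ × ℕ => p.1 * p.2) ⁻¹' {n}, coprimePairTerm w dt =
      divisorsCardTerm w n := by
  rcases eq_or_ne n 0 with rfl | hn
  · rw [tsum_congr fun dt => coprimePairTerm_of_mul_eq_zero dt.2, tsum_zero]
    simp [divisorsCardTerm]
  · rw [show (fun p : ℕ × ℕ => p.1 * p.2) ⁻¹' {n} = n.divisorsAntidiagonal by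
        ext; simp [hn], Finset.tsum_subtype', sum_divisorsAntidiagonal_coprimePairTerm hw]

theorem hasSum_divisorsCardTerm (hw : IsSquarefreeMultiplicative w)
    (hs : Summable (coprimePairTerm w)) :
    HasSum (divisorsCardTerm w) (∑' dt, coprimePairTerm w dt) := by
  simpa only [tsum_preimage_mul_coprimePairTerm hw] using
    hs.hasSum.tsum_fiberwise fun p : ℕ × ℕ => p.1 * p.2

theorem summable_norm_divisorsCardTerm (hw : IsSquarefreeMultiplicative w)
    (hs : Summable (coprimePairTerm w)) : Summable (‖divisorsCardTerm w ·‖) := by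
  simp only [Real.norm_eq_abs, abs_divisorsCardTerm]
  exact (hasSum_divisorsCardTerm hw.abs (by simpa only [abs_coprimePairTerm] using hs.abs)).summable

theorem divisorsCardTerm_mul (hw : IsSquarefreeMultiplicative w) {m n : ℕ} (h : m.Coprime n) :
    divisorsCardTerm w (m * n) = divisorsCardTerm w m * divisorsCardTerm w n := by
  simp only [divisorsCardTerm, hw.map_mul_of_coprime h, h.card_divisors_mul]
  push_cast
  ring

theorem tsum_divisorsCardTerm_prime_pow (hw : IsSquarefreeMultiplicative w) {p : ℕ}
    (hp : p.Prime) : ∑' e, divisorsCardTerm w (p ^ e) = w 1 + 2 * w p / (p : ℝ) ^ 2 := by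
  have hvanish : ∀ e ∉ ({0, 1} : Finset ℕ), divisorsCardTerm w (p ^ e) = 0 := fun e he => by
    obtain ⟨he₀, he₁⟩ : e ≠ 0 ∧ e ≠ 1 := by
      simpa only [Finset.mem_insert, Finset.mem_singleton, not_or] using he
    have hsq : ¬Squarefree (p ^ e) := by
      rw [Nat.squarefree_pow_iff hp.ne_one he₀]
      exact fun h => he₁ h.2
    rw [divisorsCardTerm, hw.eq_zero_of_not_squarefree hsq, zero_mul, zero_div]
  rw [tsum_eq_sum hvanish, Finset.sum_pair zero_ne_one]
  simp only [divisorsCardTerm, pow_zero, pow_one, Nat.divisors_one, hp.divisors,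
    Finset.card_singleton, Finset.card_pair hp.one_lt.ne]
  push_cast
  ring

theorem tsum_coprimePairTerm_eq_tprod (hw : IsSquarefreeMultiplicative w) (hw₁ : w 1 = 1)
    (hs : Summable (coprimePairTerm w)) :
    ∑' dt, coprimePairTerm w dt = ∏' p : Nat.Primes, (1 + 2 * w p / ((p : ℕ) : ℝ) ^ 2) := by
  have h₁ : divisorsCardTerm w 1 = 1 := by simp [divisorsCardTerm, hw₁]
  have h₀ : divisorsCardTerm w 0 = 0 := by simp [divisorsCardTerm]
  rw [← (hasSum_divisorsCardTerm hw hs).tsum_eq, ← EulerProduct.eulerProduct_tprod h₁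
    (divisorsCardTerm_mul hw) (summable_norm_divisorsCardTerm hw hs) h₀]
  exact tprod_congr fun p => by rw [tsum_divisorsCardTerm_prime_pow hw p.prop, hw₁]

end

/-- The double series `∑_{d,t ≥ 1, (d,t)=1} μ(d)μ(t)/(d²t²)` converges and equals
`∏_p (1 - 2/p²)`. -/
theorem stmt_5 :
    Summable (fun dt : ℕ × ℕ =>
      if 1 ≤ dt.1 ∧ 1 ≤ dt.2 ∧ Nat.Coprime dt.1 dt.2 then
        ((moebius dt.1 * moebius dt.2 : ℤ) : ℝ) / ((dt.1 : ℝ) ^ 2 * (dt.2 : ℝ) ^ 2)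
      else 0) ∧
    (∑' dt : ℕ × ℕ,
      if 1 ≤ dt.1 ∧ 1 ≤ dt.2 ∧ Nat.Coprime dt.1 dt.2 then
        ((moebius dt.1 * moebius dt.2 : ℤ) : ℝ) / ((dt.1 : ℝ) ^ 2 * (dt.2 : ℝ) ^ 2)
      else 0) = ∏' p : Nat.Primes, (1 - 2 / ((p : ℕ) : ℝ) ^ 2) := by
  have hterm : (fun dt : ℕ × ℕ =>
      if 1 ≤ dt.1 ∧ 1 ≤ dt.2 ∧ Nat.Coprime dt.1 dt.2 then
        ((moebius dt.1 * moebius dt.2 : ℤ) : ℝ) / ((dt.1 : ℝ) ^ 2 * (dt.2 : ℝ) ^ 2)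
      else 0) = coprimePairTerm (fun n => (moebius n : ℝ)) := by
    funext dt
    simp only [coprimePairTerm, Int.cast_mul]
  have hs : Summable (coprimePairTerm (fun n => (moebius n : ℝ))) :=
    summable_coprimePairTerm fun n => by exact_mod_cast abs_moebius_le_one
  refine ⟨hterm ▸ hs, ?_⟩
  rw [hterm, tsum_coprimePairTerm_eq_tprod isSquarefreeMultiplicative_moebius (by simp) hs]
  exact tprod_congr fun p => by
    rw [moebius_apply_prime p.prop]
    push_cast
    ring
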